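/- Let q_K > 1 and g_K be real numbers and let ζ_K(s) be a meromorphic function satisfying the functional equation ζ_K(s) = q_K^{(g_K - 1)(1 - 2s)}·ζ_K(1-s), with Laurent expansion ζ_K(s) = c_{-1}/(s-1) + c_0 + O(s-1) at s = 1, c_{-1} ≠ 0, and set γ_K := c_0/c_{-1}. Let f, q∞ > 0 and define ζ_O(s) := q_K^{(g_K-1)(1-2s)}·(1 - q∞^{-f s})·ζ_K(1-s). Then ζ_O(0) ≠ 0 and the logarithmic derivative at s = 0 is ζ_O'(0)/ζ_O(0) = -[ 2(g_K - 1)·ln q_K + (f/2)·ln q∞ + γ_K ]. -/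

import Mathlib

/-!
Near `s = 0` the factor `1 - q∞^{-fs}` has a simple zero and `ζ_K(1 - s)` a simple pole, so
`ζ_O` is the product of three functions that are analytic and nonvanishing at `0`:
`q_K^{(g_K-1)(1-2s)}`, the difference quotient `(1 - q∞^{-fs})/s` and
`s ζ_K(1 - s) = -c₋₁ + s h(1 - s)`. The logarithmic derivative is additive over this product.
The first factor contributes `-2(g_K - 1) ln q_K`. For a function `F` with `F 0 = 0` the logarithmic
derivative of `F s / s` at `0` is `F''(0) / (2 F'(0))`, which is `-(f/2) ln q∞` here.
The last factor contributes `h(1)/(-c₋₁) = -γ_K`.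
-/

open Filter Topology

section dslope

variable {𝕜 : Type*} [NontriviallyNormedField 𝕜] {f : 𝕜 → 𝕜} {z : 𝕜}

theorem AnalyticAt.dslope (hf : AnalyticAt 𝕜 f z) : AnalyticAt 𝕜 (dslope f z) z :=
  let ⟨_, hp⟩ := hf
  ⟨_, hp.has_fpower_series_dslope_fslope⟩

variable [CharZero 𝕜] [CompleteSpace 𝕜]

theorem AnalyticAt.deriv_dslope_self (hf : AnalyticAt 𝕜 f z) :
    deriv (_root_.dslope f z) z = iteratedDeriv 2 f z / 2 := by
  obtain ⟨p, hp⟩ := hf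
  have hcoeff : (2 : 𝕜) * p.coeff 2 = iteratedDeriv 2 f z := by
    obtain ⟨r, hpr⟩ := hp
    rw [iteratedDeriv_eq_iteratedFDeriv, ← hpr.factorial_smul (1 : 𝕜) 2, nsmul_eq_mul]
    rfl
  rw [hp.has_fpower_series_dslope_fslope.deriv, ← hcoeff, mul_div_cancel_left₀ _ two_ne_zero]
  exact FormalMultilinearSeries.coeff_fslope

theorem AnalyticAt.logDeriv_dslope_self (hf : AnalyticAt 𝕜 f z) :
    logDeriv (_root_.dslope f z) z = iteratedDeriv 2 f z / (2 * deriv f z) := by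
  rw [logDeriv_apply, hf.deriv_dslope_self, dslope_same, div_div]

end dslope

theorem logDeriv_mul_mul {𝕜 : Type*} [NontriviallyNormedField 𝕜] {f g k : 𝕜 → 𝕜} (x : 𝕜)
    (hf : f x ≠ 0) (hg : g x ≠ 0) (hk : k x ≠ 0) (hdf : DifferentiableAt 𝕜 f x)
    (hdg : DifferentiableAt 𝕜 g x) (hdk : DifferentiableAt 𝕜 k x) :
    logDeriv (fun z => f z * g z * k z) x = logDeriv f x + logDeriv g x + logDeriv k x := by
  rw [logDeriv_mul (f := fun z => f z * g z) x (mul_ne_zero hf hg) hk (hdf.mul hdg) hdk,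
    logDeriv_mul x hf hg hdf hdg]

theorem exists_analyticAt_eventuallyEq_mul_mul {𝕜 : Type*} [NontriviallyNormedField 𝕜]
    {φ f g k : 𝕜 → 𝕜} {x L : 𝕜} (hf : AnalyticAt 𝕜 f x)
    (hg : AnalyticAt 𝕜 g x) (hk : AnalyticAt 𝕜 k x) (hf0 : f x ≠ 0) (hg0 : g x ≠ 0)
    (hk0 : k x ≠ 0) (hφ : ∀ᶠ s in 𝓝[≠] x, f s * g s * k s = φ s)
    (hL : logDeriv f x + logDeriv g x + logDeriv k x = L) :
    ∃ G : 𝕜 → 𝕜, AnalyticAt 𝕜 G x ∧ (∀ᶠ s in 𝓝[≠] x, G s = φ s) ∧ G x ≠ 0 ∧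
      deriv G x / G x = L :=
  ⟨fun s => f s * g s * k s, (hf.mul hg).mul hk, hφ, mul_ne_zero (mul_ne_zero hf0 hg0) hk0,
    (logDeriv_mul_mul x hf0 hg0 hk0 hf.differentiableAt hg.differentiableAt
      hk.differentiableAt).trans hL⟩

theorem logDeriv_const_add_mul_self {𝕜 : Type*} [NontriviallyNormedField 𝕜] (c : 𝕜)
    {k : 𝕜 → 𝕜} (hk : DifferentiableAt 𝕜 k 0) :
    logDeriv (fun s => c + s * k s) 0 = k 0 / c := by
  have hderiv : HasDerivAt (fun s => c + s * k s) (k 0) 0 := by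
    simpa using ((hasDerivAt_id 0).mul hk.hasDerivAt).const_add c
  simp [logDeriv_apply, hderiv.deriv]

theorem eventually_sub_nhdsNE_zero {G : Type*} [AddGroup G] [TopologicalSpace G]
    [IsTopologicalAddGroup G] {a : G} {p : G → Prop} (hp : ∀ᶠ s in 𝓝[≠] a, p s) :
    ∀ᶠ s in 𝓝[≠] (0 : G), p (a - s) := by
  have hmap := (Homeomorph.subLeft a).map_punctured_nhds_eq 0
  rw [Homeomorph.subLeft_apply, sub_zero] at hmap
  rw [← hmap] at hp
  exact hp

theorem eventually_mul_comp_one_sub_eq_dslope_mul {F ζ h : ℂ → ℂ} {c : ℂ} (hF : F 0 = 0)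
    (hζ : ∀ᶠ s in 𝓝[≠] (1 : ℂ), ζ s = c / (s - 1) + h s) :
    ∀ᶠ s in 𝓝[≠] (0 : ℂ), F s * ζ (1 - s) = dslope F 0 s * (-c + s * h (1 - s)) := by
  filter_upwards [eventually_sub_nhdsNE_zero hζ, self_mem_nhdsWithin] with s hζs hs
  have hs : s ≠ 0 := hs
  rw [hζs, dslope_of_ne _ hs, slope_def_field, hF, sub_sub_cancel_left]
  field_simp
  ring

namespace Complex

theorem logDeriv_const_cpow {c : ℂ} (hc : c ≠ 0) {f : ℂ → ℂ} {z : ℂ}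
    (hf : DifferentiableAt ℂ f z) :
    logDeriv (fun s => c ^ f s) z = log c * deriv f z := by
  have hcf : c ^ f z ≠ 0 := cpow_ne_zero_iff.mpr (.inl hc)
  rw [logDeriv_apply, (hf.hasDerivAt.const_cpow (.inl hc)).deriv]
  field_simp

theorem dslope_one_sub_cexp_const_mul_zero (a : ℂ) :
    dslope (fun s => 1 - exp (a * s)) 0 0 = -a := by
  rw [dslope_same, ← iteratedDeriv_one, iteratedDeriv_const_sub one_pos, iteratedDeriv_neg,
    iteratedDeriv_cexp_const_mul]
  simp

theorem logDeriv_dslope_one_sub_cexp_const_mul_zero (a : ℂ) :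
    logDeriv (dslope (fun s => 1 - exp (a * s)) 0) 0 = a / 2 := by
  have hF : AnalyticAt ℂ (fun s => 1 - exp (a * s)) 0 := by fun_prop
  rw [hF.logDeriv_dslope_self, ← iteratedDeriv_one, iteratedDeriv_const_sub one_pos,
    iteratedDeriv_const_sub two_pos, iteratedDeriv_neg, iteratedDeriv_neg,
    iteratedDeriv_cexp_const_mul, iteratedDeriv_cexp_const_mul]
  rcases eq_or_ne a 0 with rfl | ha
  · simp
  · field_simp

end Complex

open Complex

theorem stmt_11_general (qK qinf : ℝ) (hqK : 1 < qK) (hqinf : 1 < qinf)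
    (gK f : ℝ) (hf : 0 < f)
    (ζK : ℂ → ℂ) (cneg cz : ℂ) (hc : cneg ≠ 0)
    (h : ℂ → ℂ) (hh : AnalyticAt ℂ h 1) (hh1 : h 1 = cz)
    (hexp : ∀ᶠ s in 𝓝[≠] (1 : ℂ), ζK s = cneg / (s - 1) + h s) :
    ∃ g : ℂ → ℂ, AnalyticAt ℂ g 0 ∧
      (∀ᶠ s in 𝓝[≠] (0 : ℂ), g s =
        (qK : ℂ) ^ (((gK : ℂ) - 1) * (1 - 2 * s)) *
          (1 - (qinf : ℂ) ^ (-(f : ℂ) * s)) * ζK (1 - s)) ∧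
      g 0 ≠ 0 ∧
      deriv g 0 / g 0 =
        -(2 * ((gK : ℂ) - 1) * (Real.log qK : ℂ) + ((f : ℂ) / 2) * (Real.log qinf : ℂ)
            + cz / cneg) := by
  have hqK0 : 0 < qK := zero_lt_one.trans hqK
  have hqinf0 : 0 < qinf := zero_lt_one.trans hqinf
  have hqKC : (qK : ℂ) ≠ 0 := ofReal_ne_zero.mpr hqK0.ne'
  set a : ℂ := -(f : ℂ) * Real.log qinf with ha_def
  have ha : a ≠ 0 := mul_ne_zero (neg_ne_zero.mpr (ofReal_ne_zero.mpr hf.ne'))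
    (ofReal_ne_zero.mpr (Real.log_pos hqinf).ne')
  have hcpow (s : ℂ) : (qinf : ℂ) ^ (-(f : ℂ) * s) = exp (a * s) := by
    rw [cpow_def_of_ne_zero (ofReal_ne_zero.mpr hqinf0.ne'), ha_def, ofReal_log hqinf0.le]
    ring_nf
  have hh_one_sub : AnalyticAt ℂ (fun s => h (1 - s)) 0 := by
    have : AnalyticAt ℂ h (1 - 0) := by rwa [sub_zero]
    fun_prop
  have hF : AnalyticAt ℂ (fun s => 1 - exp (a * s)) 0 := by fun_prop
  refine exists_analyticAt_eventuallyEq_mul_mul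
    (f := fun s => (qK : ℂ) ^ (((gK : ℂ) - 1) * (1 - 2 * s)))
    (g := dslope (fun s => 1 - exp (a * s)) 0)
    (k := fun s => -cneg + s * h (1 - s))
    (analyticAt_const.cpow (by fun_prop) (ofReal_mem_slitPlane.mpr hqK0)) hF.dslope
    (analyticAt_const.add (analyticAt_id.mul hh_one_sub)) (cpow_ne_zero_iff.mpr (.inl hqKC))
    (by rwa [dslope_one_sub_cexp_const_mul_zero, neg_ne_zero]) (by simpa using hc) ?_ ?_
  · filter_upwards [eventually_mul_comp_one_sub_eq_dslope_mul
      (F := fun s => 1 - exp (a * s)) (by simp) hexp] with s hs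
    rw [hcpow, mul_assoc _ (1 - _), hs, mul_assoc]
  · have hderiv :
        deriv (fun s : ℂ => ((gK : ℂ) - 1) * (1 - 2 * s)) 0 = -(2 * ((gK : ℂ) - 1)) := by
      simp [mul_comm]
    rw [logDeriv_const_cpow hqKC (by fun_prop), logDeriv_dslope_one_sub_cexp_const_mul_zero,
      logDeriv_const_add_mul_self _ hh_one_sub.differentiableAt, hderiv, sub_zero, hh1,
      ← ofReal_log hqK0.le]
    field_simp
    ring

/-- Logarithmic derivative at `s = 0` of `ζ_O(s) = q_K^{(g_K-1)(1-2s)}(1-q∞^{-fs})ζ_K(1-s)`,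
where `ζ_K` satisfies the functional equation `ζ_K(s) = q_K^{(g_K-1)(1-2s)}ζ_K(1-s)` and
has Laurent expansion `c₋₁/(s-1) + c₀ + O(s-1)` at `s = 1`: the (extended) function
satisfies `ζ_O(0) ≠ 0` and `ζ_O'(0)/ζ_O(0) = -[2(g_K-1)ln q_K + (f/2)ln q∞ + γ_K]`
with `γ_K = c₀/c₋₁`. -/
theorem stmt_11 (qK qinf : ℝ) (hqK : 1 < qK) (hqinf : 1 < qinf)
    (gK f : ℝ) (hf : 0 < f)
    (ζK : ℂ → ℂ) (cneg cz : ℂ) (hc : cneg ≠ 0)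
    (h : ℂ → ℂ) (hh : AnalyticAt ℂ h 1) (hh1 : h 1 = cz)
    (hexp : ∀ᶠ s in 𝓝[≠] (1 : ℂ), ζK s = cneg / (s - 1) + h s)
    (hfe : ∀ s : ℂ, ζK s = (qK : ℂ) ^ (((gK : ℂ) - 1) * (1 - 2 * s)) * ζK (1 - s)) :
    ∃ g : ℂ → ℂ, AnalyticAt ℂ g 0 ∧
      (∀ᶠ s in 𝓝[≠] (0 : ℂ), g s =
        (qK : ℂ) ^ (((gK : ℂ) - 1) * (1 - 2 * s)) *
          (1 - (qinf : ℂ) ^ (-(f : ℂ) * s)) * ζK (1 - s)) ∧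
      g 0 ≠ 0 ∧
      deriv g 0 / g 0 =
        -(2 * ((gK : ℂ) - 1) * (Real.log qK : ℂ) + ((f : ℂ) / 2) * (Real.log qinf : ℂ)
            + cz / cneg) :=
  stmt_11_general qK qinf hqK hqinf gK f hf ζK cneg cz hc h hh hh1 hexp
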